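/- Let θ > 0, p > 0, r > 0 and let J ⊂ ℂⁿ be a set of points such that the balls B(a, r), a ∈ J, are pairwise disjoint. Then for every a ∈ J, the sum ∑_{τ ∈ J, τ ≠ a} e^{−(pθ/2)|a − τ|} is bounded by a constant C depending only on n, p, θ, r (independent of J and a). -/
import Mathlib


open Metric
open MeasureTheory ENNReal

lemma exp_le_jap {c t : ℝ} (hc : 0 < c) (ht : 0 ≤ t) (s : ℕ) :
    Real.exp (-c * t) ≤ (s.factorial / c ^ s * Real.exp c) * (1 + t) ^ (-(s : ℝ)) := by
  have h1 : (0:ℝ) < 1 + t := by linarith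
  have key : (c * (1 + t)) ^ s / s.factorial ≤ Real.exp (c * (1 + t)) :=
    Real.pow_div_factorial_le_exp (x := c * (1 + t)) (by positivity) s
  have h2 : (0:ℝ) < (1 + t) ^ s := by positivity
  have h3 : (0:ℝ) < c ^ s := by positivity
  have hf : (0:ℝ) < s.factorial := by positivity
  have h4 : Real.exp (c * (1 + t)) = Real.exp c * Real.exp (c * t) := by
    rw [← Real.exp_add]; ring_nf
  have h5 : Real.exp (-c * t) * Real.exp (c * t) = 1 := by
    rw [← Real.exp_add]; ring_nf; exact Real.exp_zero
  have h6 : (1 + t) ^ s ≤ s.factorial / c ^ s * Real.exp c * Real.exp (c * t) := by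
    rw [mul_pow, div_le_iff₀ hf, h4] at key
    rw [div_mul_eq_mul_div, div_mul_eq_mul_div, le_div_iff₀ h3]
    nlinarith
  rw [Real.rpow_neg h1.le, Real.rpow_natCast, ← div_eq_mul_inv, le_div_iff₀ h2]
  have h7 := mul_le_mul_of_nonneg_left h6 (Real.exp_pos (-c * t)).le
  have h8 : Real.exp (-c*t) * (↑s.factorial / c^s * Real.exp c * Real.exp (c*t))
      = (s.factorial / c^s * Real.exp c : ℝ) := by
    rw [show Real.exp (-c*t) * (↑s.factorial / c^s * Real.exp c * Real.exp (c*t))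
        = ↑s.factorial / c^s * Real.exp c * (Real.exp (-c*t) * Real.exp (c*t)) from by ring,
      h5, mul_one]
  linarith [h7, h8.le]

lemma lint_finite (m : ℕ) (c : ℝ) (hc : 0 < c) :
    ∫⁻ ξ : EuclideanSpace ℝ (Fin m), ENNReal.ofReal (Real.exp (-c * ‖ξ‖)) < ⊤ := by
  set E := EuclideanSpace ℝ (Fin m)
  set s : ℕ := Module.finrank ℝ E + 1 with hs
  set K : ℝ := s.factorial / c ^ s * Real.exp c with hK
  calc ∫⁻ ξ : E, ENNReal.ofReal (Real.exp (-c * ‖ξ‖))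
      ≤ ∫⁻ ξ : E, ENNReal.ofReal K * ENNReal.ofReal ((1 + ‖ξ‖) ^ (-(s : ℝ))) := by
        refine lintegral_mono fun ξ => ?_
        rw [← ENNReal.ofReal_mul (by positivity)]
        exact ENNReal.ofReal_le_ofReal (exp_le_jap hc (norm_nonneg ξ) s)
    _ = ENNReal.ofReal K * ∫⁻ ξ : E, ENNReal.ofReal ((1 + ‖ξ‖) ^ (-(s : ℝ))) :=
        lintegral_const_mul' _ _ ofReal_ne_top
    _ < ⊤ := ENNReal.mul_lt_top ofReal_lt_top
        (finite_integral_one_add_norm (by exact_mod_cast lt_add_one _))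

lemma key_packing (m : ℕ) (c r : ℝ) (hc : 0 < c) (hr : 0 < r) :
    ∃ C : ℝ, 0 ≤ C ∧ ∀ u : Finset (EuclideanSpace ℝ (Fin m)),
      ((u : Set (EuclideanSpace ℝ (Fin m))).Pairwise fun a b => 2 * r ≤ dist a b) →
      ∑ τ ∈ u, Real.exp (-c * ‖τ‖) ≤ C := by
  set E := EuclideanSpace ℝ (Fin m)
  set I : ℝ≥0∞ := ∫⁻ ξ : E, ENNReal.ofReal (Real.exp (-c * ‖ξ‖)) with hIdef
  set V : ℝ≥0∞ := volume (ball (0 : E) r) with hVdef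
  have hV0 : V ≠ 0 := (measure_ball_pos volume (0:E) hr).ne'
  have hVt : V ≠ ⊤ := measure_ball_lt_top.ne
  have hI : I ≠ ⊤ := (lint_finite m c hc).ne
  have hmeas : Measurable fun ξ : E => ENNReal.ofReal (Real.exp (-c * ‖ξ‖)) :=
    (Real.continuous_exp.comp ((continuous_const.mul continuous_norm))).measurable.ennreal_ofReal
  refine ⟨(ENNReal.ofReal (Real.exp (c * r)) * I / V).toReal, ENNReal.toReal_nonneg,
    fun u hu => ?_⟩
  have main : (∑ τ ∈ u, ENNReal.ofReal (Real.exp (-c * ‖τ‖))) * V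
      ≤ ENNReal.ofReal (Real.exp (c * r)) * I := by
    have disj : (↑u : Set E).PairwiseDisjoint (fun τ => ball τ r) := by
      intro x hx y hy hxy
      exact ball_disjoint_ball (by linarith [hu hx hy hxy])
    calc (∑ τ ∈ u, ENNReal.ofReal (Real.exp (-c * ‖τ‖))) * V
        = ∑ τ ∈ u, ENNReal.ofReal (Real.exp (-c * ‖τ‖)) * volume (ball τ r) := by
          rw [Finset.sum_mul]
          exact Finset.sum_congr rfl fun τ _ => by rw [Measure.addHaar_ball_center]
      _ ≤ ∑ τ ∈ u, ∫⁻ ξ in ball τ r,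
            ENNReal.ofReal (Real.exp (c * r)) * ENNReal.ofReal (Real.exp (-c * ‖ξ‖)) := by
          refine Finset.sum_le_sum fun τ _ => ?_
          rw [← setLIntegral_const (ball τ r) (ENNReal.ofReal (Real.exp (-c * ‖τ‖)))]
          refine setLIntegral_mono (by fun_prop) fun ξ hξ => ?_
          rw [← ENNReal.ofReal_mul (Real.exp_nonneg _), ← Real.exp_add]
          refine ENNReal.ofReal_le_ofReal (Real.exp_le_exp.2 ?_)
          have h1 : ‖ξ‖ ≤ ‖τ‖ + r := by
            have h := norm_sub_norm_le ξ τ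
            rw [← dist_eq_norm] at h
            linarith [mem_ball.mp hξ]
          nlinarith [mul_le_mul_of_nonneg_left h1 hc.le]
      _ = ∫⁻ ξ in ⋃ τ ∈ u, ball τ r,
            ENNReal.ofReal (Real.exp (c * r)) * ENNReal.ofReal (Real.exp (-c * ‖ξ‖)) :=
          (lintegral_biUnion_finset disj (fun _ _ => measurableSet_ball) _).symm
      _ ≤ ∫⁻ ξ : E, ENNReal.ofReal (Real.exp (c * r)) * ENNReal.ofReal (Real.exp (-c * ‖ξ‖)) :=
          setLIntegral_le_lintegral _ _
      _ = ENNReal.ofReal (Real.exp (c * r)) * I := lintegral_const_mul' _ _ ofReal_ne_top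
  have step : (∑ τ ∈ u, ENNReal.ofReal (Real.exp (-c * ‖τ‖)))
      ≤ ENNReal.ofReal (Real.exp (c * r)) * I / V :=
    (ENNReal.le_div_iff_mul_le (Or.inl hV0) (Or.inl hVt)).2 main
  have hfin : ENNReal.ofReal (Real.exp (c * r)) * I / V ≠ ⊤ :=
    (ENNReal.div_lt_top (ENNReal.mul_ne_top ofReal_ne_top hI) hV0).ne
  calc ∑ τ ∈ u, Real.exp (-c * ‖τ‖)
      = (∑ τ ∈ u, ENNReal.ofReal (Real.exp (-c * ‖τ‖))).toReal := by
        rw [ENNReal.toReal_sum (fun τ _ => ofReal_ne_top)]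
        exact Finset.sum_congr rfl fun τ _ => (ENNReal.toReal_ofReal (Real.exp_nonneg _)).symm
    _ ≤ (ENNReal.ofReal (Real.exp (c * r)) * I / V).toReal := ENNReal.toReal_mono hfin step



/-- If the balls B(a,r), a ∈ J, are pairwise disjoint, then for every a ∈ J
the sum ∑_{τ ∈ J, τ ≠ a} e^{−(pθ/2)|a−τ|} converges and is bounded by a constant C
depending only on n, p, θ, r. -/
theorem stmt1 (n : ℕ) (θ p r : ℝ) (hθ : 0 < θ) (hp : 0 < p) (hr : 0 < r) :
    ∃ C : ℝ, ∀ J : Set (EuclideanSpace ℂ (Fin n)),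
      (J.Pairwise fun a b => Disjoint (ball a r) (ball b r)) →
      ∀ a ∈ J,
        Summable (fun τ : ↥(J \ {a}) => Real.exp (-(p * θ / 2) * dist a (τ : EuclideanSpace ℂ (Fin n)))) ∧
        ∑' τ : ↥(J \ {a}), Real.exp (-(p * θ / 2) * dist a (τ : EuclideanSpace ℂ (Fin n))) ≤ C := by
  classical
  set E := EuclideanSpace ℂ (Fin n) with hE
  letI : InnerProductSpace ℝ E := InnerProductSpace.rclikeToReal ℂ E
  set m := Module.finrank ℝ E with hm
  let φ : E ≃ₗᵢ[ℝ] EuclideanSpace ℝ (Fin m) := (stdOrthonormalBasis ℝ E).repr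
  obtain ⟨C, hC0, hC⟩ := key_packing m (p * θ / 2) r (by positivity) hr
  refine ⟨C, fun J hJ a ha => ?_⟩
  have hdist : J.Pairwise fun x y => 2 * r ≤ dist x y := by
    intro x hx y hy hxy
    by_contra h
    push_neg at h
    have h1 : midpoint ℝ x y ∈ ball x r := by
      rw [mem_ball, dist_comm, dist_left_midpoint, Real.norm_ofNat]
      linarith
    have h2 : midpoint ℝ x y ∈ ball y r := by
      rw [midpoint_comm, mem_ball, dist_comm, dist_left_midpoint, Real.norm_ofNat,
        dist_comm]
      linarith
    exact Set.disjoint_left.mp (hJ hx hy hxy) h1 h2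
  set c : ℝ := p * θ / 2 with hc
  set f : ↥(J \ {a}) → ℝ := fun τ => Real.exp (-c * dist a (τ : E)) with hf
  have hnorm : ∀ τ : ↥(J \ {a}), ‖φ (τ : E) - φ a‖ = dist a (τ : E) := by
    intro τ
    rw [← map_sub, φ.norm_map, ← dist_eq_norm, dist_comm]
  have bound : ∀ u : Finset ↥(J \ {a}), ∑ τ ∈ u, f τ ≤ C := by
    intro u
    set g : ↥(J \ {a}) → EuclideanSpace ℝ (Fin m) := fun τ => φ (τ : E) - φ a with hg
    have hginj : Function.Injective g := by
      intro x y hxy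
      have := sub_left_injective hxy
      exact Subtype.ext (φ.injective this)
    have hsum : ∑ τ ∈ u, f τ = ∑ x ∈ u.image g, Real.exp (-c * ‖x‖) := by
      rw [Finset.sum_image (fun x _ y _ hxy => hginj hxy)]
      exact Finset.sum_congr rfl fun τ _ => by rw [hg, hnorm τ]
    rw [hsum]
    refine hC _ ?_
    intro x hx y hy hxy
    simp only [Finset.coe_image, Set.mem_image, Finset.mem_coe] at hx hy
    obtain ⟨τ, _, rfl⟩ := hx
    obtain ⟨σ, _, rfl⟩ := hy
    have hτσ : (τ : E) ≠ (σ : E) := fun hh => hxy (by simp only [hg, hh])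
    have : dist (g τ) (g σ) = dist (τ : E) (σ : E) := by
      rw [hg, dist_eq_norm, sub_sub_sub_cancel_right, ← map_sub, φ.norm_map, dist_eq_norm]
    rw [this]
    exact hdist τ.2.1 σ.2.1 hτσ
  have hfnn : (0 : ↥(J \ {a}) → ℝ) ≤ f := fun τ => Real.exp_nonneg _
  have hsummable : Summable f := summable_of_sum_le hfnn bound
  exact ⟨hsummable, Summable.tsum_le_of_sum_le hsummable bound⟩
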